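/- arXiv:2409.13175 — 2 statements merged into one kernel-verified Lean document; each statement's English description precedes it below -/
import Mathlib

section
/- Let T : ℝ → ℝ, α > 0, and for i = 1, 2 let q1_i, q0_i ∈ ℝ with Δ_i = q1_i − q0_i, and let x_i ∈ [0,1] be a minimizer over [0,1] of the relaxed actor loss L_i(x) = −(x·q1_i + (1−x)·q0_i) + α·T(x). If Δ_1 > Δ_2, then x_1 ≥ x_2. (Monotonicity of the optimal relaxed allocator output in the critic advantage Q(s,1) − Q(s,0).) -/
/-! The loss is `α T(x) - Δ x - q0`, so the problems differ only in the slope of a linear term.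
Adding the two minimality inequalities, each evaluated at the other minimizer, cancels the
penalty and leaves `(Δ₁ - Δ₂)(x₁ - x₂) ≥ 0`. -/

open Set

theorem le_of_isMinOn_sub_mul {R : Type*} [CommRing R] [LinearOrder R] [IsStrictOrderedRing R]
    {s : Set R} {g : R → R} {a b x y : R}
    (hx : IsMinOn (fun t => g t - a * t) s x) (hy : IsMinOn (fun t => g t - b * t) s y)
    (hxs : x ∈ s) (hys : y ∈ s) (hba : b < a) : y ≤ x := by
  have hxy : g x - a * x ≤ g y - a * y := isMinOn_iff.mp hx y hys
  have hyx : g y - b * y ≤ g x - b * x := isMinOn_iff.mp hy x hxs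
  have hprod : 0 ≤ (a - b) * (x - y) := by linear_combination hxy + hyx
  exact sub_nonneg.mp (nonneg_of_mul_nonneg_right hprod (sub_pos.mpr hba))

theorem rla_monotone_in_advantage_general (T : ℝ → ℝ) (α : ℝ)
    (q1₁ q0₁ q1₂ q0₂ : ℝ)
    (x₁ x₂ : ℝ) (hx₁ : x₁ ∈ Set.Icc (0 : ℝ) 1) (hx₂ : x₂ ∈ Set.Icc (0 : ℝ) 1)
    (hmin₁ : ∀ y ∈ Set.Icc (0 : ℝ) 1,
      -(x₁ * q1₁ + (1 - x₁) * q0₁) + α * T x₁ ≤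
        -(y * q1₁ + (1 - y) * q0₁) + α * T y)
    (hmin₂ : ∀ y ∈ Set.Icc (0 : ℝ) 1,
      -(x₂ * q1₂ + (1 - x₂) * q0₂) + α * T x₂ ≤
        -(y * q1₂ + (1 - y) * q0₂) + α * T y)
    (hΔ : q1₂ - q0₂ < q1₁ - q0₁) :
    x₂ ≤ x₁ := by
  have h₁ : IsMinOn (fun t => α * T t - (q1₁ - q0₁) * t) (Icc 0 1) x₁ :=
    isMinOn_iff.mpr fun y hy => by linarith [hmin₁ y hy]
  have h₂ : IsMinOn (fun t => α * T t - (q1₂ - q0₂) * t) (Icc 0 1) x₂ :=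
    isMinOn_iff.mpr fun y hy => by linarith [hmin₂ y hy]
  exact le_of_isMinOn_sub_mul h₁ h₂ hx₁ hx₂ hΔ

/-- Monotonicity of the optimal relaxed allocator output in the critic
advantage Δ = q1 − q0: a larger advantage yields a (weakly) larger minimizer of
the relaxed actor loss on [0,1]. -/
theorem rla_monotone_in_advantage (T : ℝ → ℝ) (α : ℝ) (hα : 0 < α)
    (q1₁ q0₁ q1₂ q0₂ : ℝ)
    (x₁ x₂ : ℝ) (hx₁ : x₁ ∈ Set.Icc (0 : ℝ) 1) (hx₂ : x₂ ∈ Set.Icc (0 : ℝ) 1)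
    (hmin₁ : ∀ y ∈ Set.Icc (0 : ℝ) 1,
      -(x₁ * q1₁ + (1 - x₁) * q0₁) + α * T x₁ ≤
        -(y * q1₁ + (1 - y) * q0₁) + α * T y)
    (hmin₂ : ∀ y ∈ Set.Icc (0 : ℝ) 1,
      -(x₂ * q1₂ + (1 - x₂) * q0₂) + α * T x₂ ≤
        -(y * q1₂ + (1 - y) * q0₂) + α * T y)
    (hΔ : q1₂ - q0₂ < q1₁ - q0₁) :
    x₂ ≤ x₁ :=
  rla_monotone_in_advantage_general T α q1₁ q0₁ q1₂ q0₂ x₁ x₂ hx₁ hx₂ hmin₁ hmin₂ hΔ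
end

section
/- Let U be a finite set of active users, and for each u ∈ U let q1_u, q0_u ∈ ℝ with advantage Δ_u = q1_u − q0_u. Let T : ℝ → ℝ be differentiable with strictly increasing derivative, let α > 0, and for each u let μ̃_u ∈ (0,1) be a minimizer over [0,1] of the relaxed actor loss L_u(x) = −(x·q1_u + (1−x)·q0_u) + α·T(x). Let M ≤ |U| and suppose the values μ̃_u, u ∈ U, are pairwise distinct. Let S ⊆ U be the set of the M users with the largest values μ̃_u. Then S is also a set of M users with the largest advantages Δ_u, and consequently the allocation a_u = 1 for u ∈ S, a_u = 0 otherwise, maximizes Σ_{u∈U} (a_u·q1_u + (1−a_u)·q0_u) over all allocations a : U → {0,1} with Σ_{u∈U} a_u = M. (Proposition 2: ranking requests by the relaxed local allocator output solves the allocation-stage problem.) -/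
/-- Auxiliary: sum over a set of equal size is bounded by the sum over a
"top" set. -/
lemma sum_le_sum_top {U : Type*} [Fintype U] [DecidableEq U] (Δ : U → ℝ)
    (A S : Finset U) (hcard : A.card = S.card)
    (htop : ∀ u ∈ S, ∀ w, w ∉ S → Δ w ≤ Δ u) :
    ∑ u ∈ A, Δ u ≤ ∑ u ∈ S, Δ u := by
  have hA : ∑ u ∈ A, Δ u = ∑ u ∈ A ∩ S, Δ u + ∑ u ∈ A \ S, Δ u :=
    (Finset.sum_inter_add_sum_sdiff A S Δ).symm
  have hS : ∑ u ∈ S, Δ u = ∑ u ∈ A ∩ S, Δ u + ∑ u ∈ S \ A, Δ u := by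
    rw [Finset.inter_comm]
    exact (Finset.sum_inter_add_sum_sdiff S A Δ).symm
  rw [hA, hS]
  have hcd : (A \ S).card = (S \ A).card := Finset.card_sdiff_comm hcard
  rcases Finset.eq_empty_or_nonempty (A \ S) with he | hne
  · have : (S \ A) = ∅ := Finset.card_eq_zero.mp (by rw [← hcd, he, Finset.card_empty])
    simp [he, this]
  · have hne' : (S \ A).Nonempty := Finset.card_pos.mp (hcd ▸ Finset.card_pos.mpr hne)
    obtain ⟨v, hv, hvmin⟩ := Finset.exists_min_image (S \ A) Δ hne'
    have hvS : v ∈ S := (Finset.mem_sdiff.mp hv).1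
    have h1 : ∑ u ∈ A \ S, Δ u ≤ (A \ S).card • Δ v := by
      apply Finset.sum_le_card_nsmul
      intro w hw
      exact htop v hvS w (Finset.mem_sdiff.mp hw).2
    have h2 : (S \ A).card • Δ v ≤ ∑ u ∈ S \ A, Δ u :=
      Finset.card_nsmul_le_sum _ _ _ (fun u hu => hvmin u hu)
    have := h1.trans (le_of_eq (by rw [hcd]) |>.trans h2)
    linarith

/-- Proposition 2: ranking requests by the relaxed local allocator output
μ̃ solves the allocation-stage problem.  The top-M users by μ̃ are also the
top-M users by advantage Δ, hence giving them the real-time recommendation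
maximizes the total critic value among all allocations with exactly M
real-time recommendations. -/
theorem poolRank_top_M_optimal {U : Type*} [Fintype U] [DecidableEq U]
    (q1 q0 : U → ℝ) (Δ : U → ℝ) (hΔ : ∀ u, Δ u = q1 u - q0 u)
    (T : ℝ → ℝ) (hT : Differentiable ℝ T) (hT' : StrictMono (deriv T))
    (α : ℝ) (hα : 0 < α)
    (μ : U → ℝ) (hμmem : ∀ u, μ u ∈ Set.Ioo (0 : ℝ) 1)
    (hμmin : ∀ u, ∀ y ∈ Set.Icc (0 : ℝ) 1,
      -(μ u * q1 u + (1 - μ u) * q0 u) + α * T (μ u) ≤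
        -(y * q1 u + (1 - y) * q0 u) + α * T y)
    (M : ℕ) (hM : M ≤ Fintype.card U)
    (hinj : Function.Injective μ)
    (S : Finset U) (hScard : S.card = M)
    (hStop : ∀ u ∈ S, ∀ w, w ∉ S → μ w ≤ μ u) :
    (∀ u ∈ S, ∀ w, w ∉ S → Δ w ≤ Δ u) ∧
    (∀ a : U → ℕ, (∀ u, a u = 0 ∨ a u = 1) → (∑ u, a u = M) →
      ∑ u, ((a u : ℝ) * q1 u + (1 - (a u : ℝ)) * q0 u) ≤
        ∑ u, (if u ∈ S then q1 u else q0 u)) := by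
  -- First-order condition: Δ u = α * deriv T (μ u)
  have key : ∀ u, Δ u = α * deriv T (μ u) := by
    intro u
    have hmem := hμmem u
    set f : ℝ → ℝ := fun x => -(x * q1 u + (1 - x) * q0 u) + α * T x with hf
    have hloc : IsLocalMin f (μ u) := by
      apply Filter.eventually_of_mem (isOpen_Ioo.mem_nhds hmem)
      intro y hy
      exact hμmin u y (Set.Ioo_subset_Icc_self hy)
    have h1 : HasDerivAt (fun x : ℝ => -(x * q1 u + (1 - x) * q0 u))
        (-(q1 u - q0 u)) (μ u) := by
      have : HasDerivAt (fun x : ℝ => -(x * q1 u + (1 - x) * q0 u))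
          (-(1 * q1 u + (0 - 1) * q0 u)) (μ u) := (((hasDerivAt_id (μ u)).mul_const (q1 u)).add
        (((hasDerivAt_const (μ u) (1:ℝ)).sub (hasDerivAt_id (μ u))).mul_const (q0 u))).neg
      convert this using 1
      ring
    have hd : HasDerivAt f (-(q1 u - q0 u) + α * deriv T (μ u)) (μ u) :=
      h1.add (((hT (μ u)).hasDerivAt).const_mul α)
    have h0 := hloc.hasDerivAt_eq_zero hd
    rw [hΔ u]
    linarith
  have hΔtop : ∀ u ∈ S, ∀ w, w ∉ S → Δ w ≤ Δ u := by
    intro u hu w hw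
    rw [key u, key w]
    exact mul_le_mul_of_nonneg_left (hT'.monotone (hStop u hu w hw)) hα.le
  refine ⟨hΔtop, ?_⟩
  intro a ha hsum
  set A : Finset U := Finset.univ.filter (fun u => a u = 1) with hAdef
  have hAcard : A.card = M := by
    rw [← hsum, hAdef, Finset.card_filter]
    apply Finset.sum_congr rfl
    intro u _
    rcases ha u with h | h <;> simp [h]
  have hL : ∑ u, ((a u : ℝ) * q1 u + (1 - (a u : ℝ)) * q0 u)
      = ∑ u, (q0 u + if u ∈ A then Δ u else 0) := by
    apply Finset.sum_congr rfl
    intro u _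
    rcases ha u with h | h <;> simp [hAdef, h, hΔ u] <;> ring
  have hR : ∑ u, (if u ∈ S then q1 u else q0 u)
      = ∑ u, (q0 u + if u ∈ S then Δ u else 0) := by
    apply Finset.sum_congr rfl
    intro u _
    by_cases h : u ∈ S <;> simp [h, hΔ u]
  rw [hL, hR, Finset.sum_add_distrib, Finset.sum_add_distrib]
  gcongr ?_ + ?_
  · exact le_refl _
  · rw [Finset.sum_ite_mem, Finset.sum_ite_mem, Finset.univ_inter, Finset.univ_inter]
    exact sum_le_sum_top Δ A S (by rw [hAcard, hScard])
      hΔtop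
end
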